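/- Let 𝒩₁ := cone 𝒱 + ℝ₊(0_{X*},1) ⊆ X*×ℝ. (1) If 𝒱 is a convex subset of X*×ℝ, then 𝒩₁ is convex. (2) If 𝒱 is compact in X*×ℝ (weak*-topology on X* times the usual topology on ℝ) and for every v = (v¹,v²) ∈ 𝒱 there exists x̄ ∈ X with ⟨v¹, x̄⟩ < v², then 𝒩₁ is closed. -/

import Mathlib

/-!
Write `ℝ₊(0,1)` as the cone over `e = (0,1)`. Then `cone 𝒱 + cone {e}` is the cone over the
convex join of `𝒱` and `{e}`, i.e. over the union of the segments `[v, e]`, `v ∈ 𝒱`. The join of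
convex sets is convex, and so is the cone over a convex set. For closedness, the join of a compact
set with a point is compact, and it avoids `0`: the functional `w ↦ w² - ⟨w¹, x̄⟩` given by the
Slater condition at `v` is positive at `v` and at `e`, hence on `[v, e]`. In a Hausdorff
topological vector space the cone over a compact set not containing `0` is closed.
-/

open Pointwise

/-- The cone generated by a set `A`: `cone A = {λa : λ ≥ 0, a ∈ A}`. -/
def coneSet {E : Type*} [SMul ℝ E] (A : Set E) : Set E :=
  {p | ∃ l : ℝ, 0 ≤ l ∧ ∃ a ∈ A, p = l • a}

open Set Filter Topology

section Cone

variable {E : Type*} [AddCommGroup E] [Module ℝ E]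

theorem smul_add_smul_mem_coneSet_convexJoin {A B : Set E} {a b : E} (ha : a ∈ A) (hb : b ∈ B)
    {l m : ℝ} (hl : 0 ≤ l) (hm : 0 ≤ m) : l • a + m • b ∈ coneSet (convexJoin ℝ A B) := by
  rcases (add_nonneg hl hm).eq_or_lt with h | h
  · obtain ⟨rfl, rfl⟩ : l = 0 ∧ m = 0 := ⟨by linarith, by linarith⟩
    exact ⟨0, le_rfl, a, segment_subset_convexJoin ha hb (left_mem_segment ℝ a b), by simp⟩
  · refine ⟨l + m, h.le, (l / (l + m)) • a + (m / (l + m)) • b,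
      segment_subset_convexJoin ha hb
        ⟨_, _, by positivity, by positivity, by field_simp, rfl⟩, ?_⟩
    rw [smul_add, smul_smul, smul_smul, mul_div_cancel₀ _ h.ne', mul_div_cancel₀ _ h.ne']

theorem coneSet_add_coneSet (A B : Set E) :
    coneSet A + coneSet B = coneSet (convexJoin ℝ A B) := by
  ext p
  constructor
  · rintro ⟨_, ⟨l, hl, a, ha, rfl⟩, _, ⟨m, hm, b, hb, rfl⟩, rfl⟩
    exact smul_add_smul_mem_coneSet_convexJoin ha hb hl hm
  · rintro ⟨l, hl, x, hx, rfl⟩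
    obtain ⟨a, ha, b, hb, s, t, hs, ht, -, rfl⟩ := mem_convexJoin.1 hx
    rw [smul_add, smul_smul, smul_smul]
    exact ⟨_, ⟨l * s, by positivity, a, ha, rfl⟩, _, ⟨l * t, by positivity, b, hb, rfl⟩, rfl⟩

protected theorem Convex.coneSet {A : Set E} (hA : Convex ℝ A) : Convex ℝ (coneSet A) := by
  rintro _ ⟨l, hl, a, ha, rfl⟩ _ ⟨m, hm, b, hb, rfl⟩ s t hs ht -
  rw [smul_smul, smul_smul]
  obtain ⟨k, hk, c, hc, hck⟩ :=
    smul_add_smul_mem_coneSet_convexJoin ha hb (mul_nonneg hs hl) (mul_nonneg ht hm)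
  exact ⟨k, hk, c, convexJoin_subset le_rfl le_rfl hA hc, hck⟩

theorem coneSet_eq_image_smul (A : Set E) :
    coneSet A = (fun q : ℝ × E => q.1 • q.2) '' (Ici 0 ×ˢ A) := by
  ext p
  constructor
  · rintro ⟨l, hl, a, ha, rfl⟩
    exact ⟨(l, a), ⟨hl, ha⟩, rfl⟩
  · rintro ⟨⟨l, a⟩, ⟨hl, ha⟩, rfl⟩
    exact ⟨l, hl, a, ha, rfl⟩

theorem zero_notMem_convexJoin {A B : Set E}
    (h : ∀ a ∈ A, ∀ b ∈ B, ∃ f : E →ₗ[ℝ] ℝ, 0 < f a ∧ 0 < f b) :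
    (0 : E) ∉ convexJoin ℝ A B := by
  simp only [mem_convexJoin, not_exists, not_and]
  intro a ha b hb hab
  obtain ⟨f, hfa, hfb⟩ := h a ha b hb
  simpa using (convex_halfSpace_gt f.isLinear 0).segment_subset hfa hfb hab

variable [TopologicalSpace E]

theorem IsCompact.convexJoin [ContinuousAdd E] [ContinuousSMul ℝ E] {A B : Set E}
    (hA : IsCompact A) (hB : IsCompact B) : IsCompact (_root_.convexJoin ℝ A B) := by
  have : _root_.convexJoin ℝ A B =
      (fun q : E × E × ℝ => (1 - q.2.2) • q.1 + q.2.2 • q.2.1) '' (A ×ˢ B ×ˢ Icc 0 1) := by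
    ext x
    simp only [mem_convexJoin, segment_eq_image, mem_image, mem_prod, Prod.exists]
    aesop
  rw [this]
  exact (hA.prod (hB.prod isCompact_Icc)).image (by fun_prop)

/-- Along an ultrafilter converging in the cone the scalars stay bounded: if they tended to
`+∞`, the generators `t⁻¹ • (t • k)` would tend to `0 ∉ K`. -/
theorem IsCompact.isClosed_coneSet [ContinuousSMul ℝ E] [T2Space E] {K : Set E}
    (hK : IsCompact K) (h0 : (0 : E) ∉ K) : IsClosed (coneSet K) := by
  rw [coneSet_eq_image_smul, isClosed_iff_ultrafilter]
  intro p 𝒰 h𝒰 hmem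
  set 𝒢 := Ultrafilter.ofComapInfPrincipal hmem
  have hD : Ici 0 ×ˢ K ∈ 𝒢 := Ultrafilter.ofComapInfPrincipal_mem hmem
  have hlim : Tendsto (fun q : ℝ × E => q.1 • q.2) 𝒢 (𝓝 p) := by
    rw [Tendsto, ← Ultrafilter.coe_map, Ultrafilter.ofComapInfPrincipal_eq_of_map]
    exact h𝒰
  obtain ⟨k, hkK, hk⟩ := hK.ultrafilter_le_nhds (𝒢.map Prod.snd)
    (le_principal_iff.2 (𝒢.mem_map.2 (mem_of_superset hD fun _ hq => (mem_prod.1 hq).2)))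
  have hk : Tendsto Prod.snd (𝒢 : Filter (ℝ × E)) (𝓝 k) := hk
  have hbdd : ∃ M, ∀ᶠ q : ℝ × E in 𝒢, q.1 ∈ Icc 0 M := by
    by_contra! hunb
    have htop : Tendsto Prod.fst (𝒢 : Filter (ℝ × E)) atTop := tendsto_atTop.2 fun M => by
      filter_upwards [hunb M, hD] with q hq hqD
      exact (not_le.1 fun h => hq ⟨hqD.1, h⟩).le
    have hk0 : Tendsto Prod.snd (𝒢 : Filter (ℝ × E)) (𝓝 (0 : E)) := by
      have := (tendsto_inv_atTop_zero.comp htop).smul hlim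
      rw [zero_smul] at this
      refine this.congr' ?_
      filter_upwards [htop.eventually_gt_atTop 0] with q hq
      exact inv_smul_smul₀ hq.ne' q.2
    exact h0 (tendsto_nhds_unique hk hk0 ▸ hkK)
  obtain ⟨M, hM⟩ := hbdd
  obtain ⟨t, ht, htlim⟩ :=
    isCompact_Icc.ultrafilter_le_nhds (𝒢.map Prod.fst) (le_principal_iff.2 hM)
  have htlim : Tendsto Prod.fst (𝒢 : Filter (ℝ × E)) (𝓝 t) := htlim
  exact ⟨(t, k), ⟨ht.1, hkK⟩, tendsto_nhds_unique (htlim.smul hk) hlim⟩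

end Cone

theorem coneSet_singleton_zero_one {F : Type*} [AddCommGroup F] [Module ℝ F] :
    coneSet {((0 : F), (1 : ℝ))} = {p : F × ℝ | p.1 = 0 ∧ 0 ≤ p.2} := by
  ext ⟨x, μ⟩
  simp [coneSet, Prod.ext_iff, eq_comm, and_comm]

theorem stmt18_general
    {X : Type*} [AddCommGroup X] [Module ℝ X] [TopologicalSpace X]
    {T : Type*}
    (U : T → Set (WeakDual ℝ X × ℝ)) :
    (Convex ℝ (⋃ t, U t) →
      Convex ℝ (coneSet (⋃ t, U t) + {p : WeakDual ℝ X × ℝ | p.1 = 0 ∧ 0 ≤ p.2})) ∧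
    (IsCompact (⋃ t, U t) →
      (∀ v ∈ ⋃ t, U t, ∃ x : X, v.1 x < v.2) →
      IsClosed (coneSet (⋃ t, U t) + {p : WeakDual ℝ X × ℝ | p.1 = 0 ∧ 0 ≤ p.2})) := by
  rw [← coneSet_singleton_zero_one, coneSet_add_coneSet]
  refine ⟨fun hV => (hV.convexJoin (convex_singleton _)).coneSet, fun hV hslater => ?_⟩
  refine (hV.convexJoin isCompact_singleton).isClosed_coneSet (zero_notMem_convexJoin ?_)
  rintro v hv _ rfl
  obtain ⟨x, hx⟩ := hslater v hv
  -- `f w = w.2 - w.1 x`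
  let f : WeakDual ℝ X × ℝ →ₗ[ℝ] ℝ := LinearMap.snd ℝ _ ℝ -
    ((topDualPairing ℝ X).flip x ∘ₗ WeakDual.toStrongDual.toLinearMap) ∘ₗ LinearMap.fst ℝ _ ℝ
  exact ⟨f, by simpa [f] using hx, by simp [f]⟩

/-- Propositions 4.1(i) and 4.2(i): (1) if 𝒱 is convex, then 𝒩₁ = cone 𝒱 + ℝ₊(0,1) is
convex; (2) if 𝒱 is compact and the Slater-type condition holds (for every v ∈ 𝒱 there
is x̄ with ⟨v¹,x̄⟩ < v²), then 𝒩₁ is closed. -/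
theorem stmt18
    {X : Type*} [AddCommGroup X] [Module ℝ X] [TopologicalSpace X]
    [IsTopologicalAddGroup X] [ContinuousSMul ℝ X] [LocallyConvexSpace ℝ X] [T2Space X]
    {T : Type*} [Nonempty T]
    (U : T → Set (WeakDual ℝ X × ℝ)) (hU : ∀ t, (U t).Nonempty) :
    (Convex ℝ (⋃ t, U t) →
      Convex ℝ (coneSet (⋃ t, U t) + {p : WeakDual ℝ X × ℝ | p.1 = 0 ∧ 0 ≤ p.2})) ∧
    (IsCompact (⋃ t, U t) →
      (∀ v ∈ ⋃ t, U t, ∃ x : X, v.1 x < v.2) →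
      IsClosed (coneSet (⋃ t, U t) + {p : WeakDual ℝ X × ℝ | p.1 = 0 ∧ 0 ≤ p.2})) :=
  stmt18_general U
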